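/- For all integers 1 ≤ p, q ≤ N, A A* = Γ S(q,p) Γ*, where Γ ∈ ℂ^{p×p} is the unitary diagonal matrix with entries Γ_{j,j} = exp(-iπ(j-1)(q-1)/N) for 1 ≤ j ≤ p. In particular, A A* is unitarily similar, via a diagonal unitary, to the real symmetric matrix S(q,p). -/

import Mathlib

open Matrix Complex

/-- The twiddle factor `ω = exp(2πi/N)`. -/
noncomputable def omegaN (N : ℕ) : ℂ := Complex.exp (2 * Real.pi * Complex.I / N)

/-- The `p × q` Fourier submatrix `A` with entries `A_{j,k} = ω^{-(j-1)(k-1)}`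
(indices here are 0-based). -/
noncomputable def fourierA (N p q : ℕ) : Matrix (Fin p) (Fin q) ℂ :=
  fun j k => omegaN N ^ (-(((j : ℕ) * (k : ℕ) : ℕ) : ℤ))

/-- The periodic prolate matrix `S(a,b) ∈ ℝ^{b×b}` with entries
`sin(aπ(j-k)/N)/sin(π(j-k)/N)` off the diagonal and `a` on the diagonal.
In particular `prolateS N q p : Matrix (Fin p) (Fin p) ℝ` is `S(q,p)`. -/
noncomputable def prolateS (N a b : ℕ) : Matrix (Fin b) (Fin b) ℝ :=
  fun j k => if j = k then (a : ℝ)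
    else Real.sin ((a : ℝ) * Real.pi * (((j : ℕ) : ℝ) - ((k : ℕ) : ℝ)) / N) /
         Real.sin (Real.pi * (((j : ℕ) : ℝ) - ((k : ℕ) : ℝ)) / N)

/-- The unitary diagonal matrix `Γ ∈ ℂ^{p×p}` with entries
`Γ_{j,j} = exp(-iπ(j-1)(q-1)/N)` (0-based: `exp(-iπ j (q-1)/N)`). -/
noncomputable def gammaP (N p q : ℕ) : Matrix (Fin p) (Fin p) ℂ :=
  Matrix.diagonal fun j =>
    Complex.exp (-(Real.pi : ℂ) * Complex.I * ((j : ℕ) : ℂ) * ((q : ℂ) - 1) / (N : ℂ))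

/-!
Entrywise, `(A A*)_{jk}` is a geometric sum in `ω^(k-j)`, i.e. a Dirichlet kernel: with
`θ = π (k - j) / N`, `∑_{m<q} e^{2imθ} = e^{i(q-1)θ} sin(qθ) / sin θ`, where `sin θ ≠ 0` because
`0 < |k - j| < N`. The phase `e^{i(q-1)θ}` is exactly `Γ_j conj(Γ_k)`, and the real ratio is
`S(q,p)_{jk}`.
-/

open Finset
open scoped Real

lemma exp_ofReal_mul_I_mul_star (x y : ℝ) :
    exp (x * I) * star (exp (y * I)) = exp ((x - y : ℝ) * I) := by
  rw [RCLike.star_def, ← exp_conj, ← exp_add, map_mul, conj_ofReal, conj_I, ofReal_sub]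
  congr 1
  ring

lemma conjTranspose_diagonal_exp_mul_I_mul_self {n : Type*} [Fintype n] [DecidableEq n]
    (a : n → ℝ) :
    (diagonal fun i => exp (a i * I))ᴴ * diagonal (fun i => exp (a i * I)) = 1 := by
  rw [diagonal_conjTranspose, diagonal_mul_diagonal, ← diagonal_one]
  congr 1
  funext i
  rw [Pi.star_apply, RCLike.star_def, conj_mul', norm_exp_ofReal_mul_I]
  simp

lemma diagonal_exp_mul_I_mul_mul_conjTranspose_apply {n : Type*} [Fintype n] [DecidableEq n]
    (a : n → ℝ) (M : Matrix n n ℂ) (j k : n) :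
    (diagonal (fun i => exp (a i * I)) * M * (diagonal fun i => exp (a i * I))ᴴ) j k =
      exp ((a j - a k : ℝ) * I) * M j k := by
  rw [diagonal_conjTranspose, mul_diagonal, diagonal_mul, Pi.star_apply, mul_right_comm,
    exp_ofReal_mul_I_mul_star]

lemma exp_two_mul_I_sub_one (s : ℝ) :
    exp (2 * s * I) - 1 = 2 * I * Real.sin s * exp (s * I) := by
  have h : exp (-(s : ℂ) * I) * exp (s * I) = 1 := by rw [← exp_add]; simp
  rw [ofReal_sin, Complex.sin, show 2 * (s : ℂ) * I = s * I + s * I by ring, exp_add]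
  linear_combination h - (exp (-(s : ℂ) * I) * exp (s * I) - exp (s * I) * exp (s * I)) * I_sq

lemma geom_sum_exp_two_mul_I (q : ℕ) {t : ℝ} (ht : Real.sin t ≠ 0) :
    ∑ m ∈ range q, exp (2 * t * I) ^ m =
      exp ((((q : ℝ) - 1) * t : ℝ) * I) * (Real.sin (q * t) / Real.sin t : ℝ) := by
  have hne : exp (2 * t * I) - 1 ≠ 0 := by
    rw [exp_two_mul_I_sub_one]
    exact mul_ne_zero (mul_ne_zero (by simp) (ofReal_ne_zero.2 ht)) (exp_ne_zero _)
  have hexp : exp ((((q : ℝ) - 1) * t : ℝ) * I) * exp (t * I) = exp ((q * t : ℝ) * I) := by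
    rw [← exp_add]; congr 1; push_cast; ring
  rw [← mul_left_inj' hne, geom_sum_mul, ← exp_nat_mul,
    show (q : ℂ) * (2 * t * I) = 2 * (q * t : ℝ) * I by push_cast; ring,
    exp_two_mul_I_sub_one, exp_two_mul_I_sub_one, ← hexp, ofReal_div]
  have hs : ((Real.sin t : ℝ) : ℂ) ≠ 0 := ofReal_ne_zero.2 ht
  field_simp

lemma sin_pi_mul_sub_div_ne_zero {N a b : ℕ} (ha : a < N) (hb : b < N) (hab : a ≠ b) :
    Real.sin (π * ((a : ℝ) - b) / N) ≠ 0 := by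
  have hN : (0 : ℝ) < N := by exact_mod_cast (Nat.zero_le _).trans_lt ha
  have ha' : (a : ℝ) < N := by exact_mod_cast ha
  have hb' : (b : ℝ) < N := by exact_mod_cast hb
  rw [Ne, Real.sin_eq_zero_iff_of_lt_of_lt]
  · simp [Real.pi_ne_zero, sub_eq_zero, hN.ne', hab]
  · rw [lt_div_iff₀ hN]; nlinarith [Real.pi_pos, (a.cast_nonneg : (0 : ℝ) ≤ a)]
  · rw [div_lt_iff₀ hN]; nlinarith [Real.pi_pos, (b.cast_nonneg : (0 : ℝ) ≤ b)]

lemma gammaP_eq_diagonal_exp (N p q : ℕ) :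
    gammaP N p q = diagonal fun j : Fin p => exp ((-(π * j * ((q : ℝ) - 1) / N) : ℝ) * I) := by
  unfold gammaP
  congr
  funext j
  congr 1
  push_cast
  ring

lemma fourierA_apply_eq_exp (N p q : ℕ) (j : Fin p) (k : Fin q) :
    fourierA N p q j k = exp ((-(2 * π * j * k / N) : ℝ) * I) := by
  rw [fourierA, omegaN, ← exp_int_mul]
  congr 1
  push_cast
  ring

lemma fourierA_mul_conjTranspose_apply (N p q : ℕ) (j k : Fin p) :
    (fourierA N p q * (fourierA N p q)ᴴ) j k =
      ∑ m ∈ range q, exp (2 * (π * ((k : ℝ) - j) / N : ℝ) * I) ^ m := by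
  rw [mul_apply, ← Fin.sum_univ_eq_sum_range]
  refine Fintype.sum_congr _ _ fun m => ?_
  rw [conjTranspose_apply, fourierA_apply_eq_exp, fourierA_apply_eq_exp, exp_ofReal_mul_I_mul_star,
    ← exp_nat_mul]
  congr 1
  push_cast
  ring

lemma prolateS_apply_of_ne (N a b : ℕ) {j k : Fin b} (hjk : j ≠ k) :
    prolateS N a b j k =
      Real.sin (a * (π * ((k : ℝ) - j) / N)) / Real.sin (π * ((k : ℝ) - j) / N) := by
  simp only [prolateS, if_neg hjk]
  rw [← neg_div_neg_eq, ← Real.sin_neg, ← Real.sin_neg]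
  congr 2 <;> ring

theorem fourierA_mul_conjTranspose_fourierA_general
    (N p q : ℕ) (hpN : p ≤ N) :
    (gammaP N p q)ᴴ * gammaP N p q = 1 ∧
    fourierA N p q * (fourierA N p q)ᴴ =
      gammaP N p q * (prolateS N q p).map (Complex.ofReal) * (gammaP N p q)ᴴ := by
  rw [gammaP_eq_diagonal_exp]
  refine ⟨conjTranspose_diagonal_exp_mul_I_mul_self _, ?_⟩
  ext j k
  rw [fourierA_mul_conjTranspose_apply, diagonal_exp_mul_I_mul_mul_conjTranspose_apply, map_apply]
  rcases eq_or_ne j k with rfl | hjk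
  · simp [prolateS]
  · have hsin := sin_pi_mul_sub_div_ne_zero (k.2.trans_le hpN) (j.2.trans_le hpN)
      (Fin.val_ne_of_ne hjk.symm)
    rw [prolateS_apply_of_ne N q p hjk, geom_sum_exp_two_mul_I q hsin]
    congr 4
    ring

theorem fourierA_mul_conjTranspose_fourierA
    (N p q : ℕ) (hN : 0 < N) (hp1 : 1 ≤ p) (hpN : p ≤ N) (hq1 : 1 ≤ q) (hqN : q ≤ N) :
    (gammaP N p q)ᴴ * gammaP N p q = 1 ∧
    fourierA N p q * (fourierA N p q)ᴴ =
      gammaP N p q * (prolateS N q p).map (Complex.ofReal) * (gammaP N p q)ᴴ :=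
  fourierA_mul_conjTranspose_fourierA_general N p q hpN
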